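/- arXiv:2312.14477 — 2 statements merged into one kernel-verified Lean document; each statement's English description precedes it below -/
import Mathlib

section
/- Let {H; E = {H_ι}; D_E} be a commutative quantized domain (the projections P_ι onto H_ι mutually commute) and let π: A → C*(D_E) be a local representation of a unital locally C*-algebra A. If π is irreducible, i.e., π(A)' ∩ C*(D_E) = ℂ·I_{D_E} where π(A)' = {T ∈ B(H) : Tπ(a) ⊆ π(a)T for all a ∈ A}, then H_ι = H for all ι, and consequently C*(D_E) = B(H). -/
noncomputable section

/-- A C*-seminorm on a complex *-algebra. -/
structure IsCStarSeminorm {A : Type*} [Ring A] [StarRing A] [Algebra ℂ A] (p : A → ℝ) : Prop where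
  map_zero : p 0 = 0
  add_le : ∀ a b, p (a + b) ≤ p a + p b
  smul_eq : ∀ (c : ℂ) (a : A), p (c • a) = ‖c‖ * p a
  mul_le : ∀ a b, p (a * b) ≤ p a * p b
  star_eq : ∀ a, p (star a) = p a
  cstar : ∀ a, p (star a * a) = p a ^ 2

/-- A locally C*-algebra structure on a topological *-algebra `A`: an upward filtered
family of C*-seminorms indexed by `Λ` determining the topology, separating (Hausdorff),
and complete with respect to them. -/
structure LCS (Λ : Type*) [Preorder Λ] (A : Type*) [Ring A] [StarRing A] [Algebra ℂ A]
    [TopologicalSpace A] where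
  p : Λ → A → ℝ
  seminorm : ∀ l, IsCStarSeminorm (p l)
  mono : ∀ ⦃l₁ l₂⦄, l₁ ≤ l₂ → ∀ a, p l₁ a ≤ p l₂ a
  separates : ∀ a, (∀ l, p l a = 0) → a = 0
  nhds_iff : ∀ s : Set A, s ∈ nhds (0 : A) ↔ ∃ l, ∃ ε > (0 : ℝ), {a | p l a < ε} ⊆ s
  complete : ∀ f : Filter A, f.NeBot →
    (∀ l, ∀ ε > (0 : ℝ), ∃ s ∈ f, ∀ a ∈ s, ∀ b ∈ s, p l (a - b) < ε) → ∃ x, f ≤ nhds x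


open scoped InnerProductSpace

/-- A quantized domain `{H; E; D_E}` in a Hilbert space `H`: an upward filtered family
`E = {H_ι}` of nonzero closed subspaces whose union is dense in `H`. -/
structure QD (Υ : Type*) [Preorder Υ] (H : Type*) [NormedAddCommGroup H]
    [InnerProductSpace ℂ H] [CompleteSpace H] where
  E : Υ → Submodule ℂ H
  isClosed : ∀ i, IsClosed (E i : Set H)
  nonzero : ∀ i, E i ≠ ⊥
  mono : ∀ ⦃i j⦄, i ≤ j → E i ≤ E j
  dense : Dense (⋃ i, (E i : Set H))

namespace QD

variable {Υ : Type*} [Preorder Υ] {H : Type*} [NormedAddCommGroup H]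
  [InnerProductSpace ℂ H] [CompleteSpace H] (Q : QD Υ H)

/-- The union space `D_E = ⋃ ι H_ι` (as a submodule of `H`). -/
def D : Submodule ℂ H := ⨆ i, Q.E i

/-- The orthogonal projection `P_ι` of `H` onto `H_ι`, as a bounded operator on `H`. -/
def proj (i : Υ) : H →L[ℂ] H :=
  haveI : CompleteSpace (Q.E i) := (Q.isClosed i).completeSpace_coe
  (Q.E i).subtypeL.comp ((Q.E i).orthogonalProjectionOnto)

theorem proj_mem_E (i : Υ) (x : H) : Q.proj i x ∈ Q.E i := by
  haveI : CompleteSpace (Q.E i) := (Q.isClosed i).completeSpace_coe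
  simp [QD.proj]

theorem mem_D_of_mem {i : Υ} {x : H} (h : x ∈ Q.E i) : x ∈ Q.D :=
  Submodule.mem_iSup_of_mem i h

theorem proj_mem_D (i : Υ) (x : H) : Q.proj i x ∈ Q.D :=
  Q.mem_D_of_mem (Q.proj_mem_E i x)

/-- The composition `T P_ι`, as a map `H → H` (well defined since `ran P_ι ⊆ D_E`). -/
def applyP (T : Q.D →ₗ[ℂ] Q.D) (i : Υ) (x : H) : H :=
  (T ⟨Q.proj i x, Q.proj_mem_D i x⟩ : H)

/-- Membership in `C*(D_E)`: for every `ι`, `T P_ι = P_ι T P_ι` is a bounded operator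
on `H` and `P_ι T ⊆ T P_ι`. -/
def InCStar (T : Q.D →ₗ[ℂ] Q.D) : Prop :=
  ∀ i : Υ,
    (∃ C : ℝ, ∀ x : H, ‖Q.applyP T i x‖ ≤ C * ‖x‖) ∧
    (∀ x : H, Q.proj i (Q.applyP T i x) = Q.applyP T i x) ∧
    (∀ x : Q.D, Q.proj i ((T x : H)) = Q.applyP T i (x : H))

/-- The restriction to `D_E` of a bounded operator on `H` leaving `D_E` invariant. -/
def restrictD (T : H →L[ℂ] H) (h : ∀ x : Q.D, T (x : H) ∈ Q.D) : Q.D →ₗ[ℂ] Q.D where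
  toFun x := ⟨T x, h x⟩
  map_add' x y := by ext : 1; simp
  map_smul' c x := by ext : 1; simp

end QD
/-- A local representation of a locally C*-algebra `A` on the quantized domain
`{H; E; D_E}`: a unital *-morphism `π : A → C*(D_E)` such that for each `ι` there is
`λ` with `‖π(a)‖_ι ≤ p_λ(a)` for all `a`. -/
structure LocalRepQ {Λ A : Type*} [Preorder Λ] [Ring A] [StarRing A] [Algebra ℂ A]
    [TopologicalSpace A] {Υ : Type*} [Preorder Υ] {H : Type*} [NormedAddCommGroup H]
    [InnerProductSpace ℂ H] [CompleteSpace H] (L : LCS Λ A) (Q : QD Υ H) where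
  π : A → (Q.D →ₗ[ℂ] Q.D)
  map_add : ∀ a b, π (a + b) = π a + π b
  map_smul : ∀ (c : ℂ) (a : A), π (c • a) = c • π a
  map_mul : ∀ a b, π (a * b) = (π a) ∘ₗ (π b)
  map_one : π 1 = LinearMap.id
  map_star : ∀ (a : A) (ξ ζ : Q.D),
    ⟪((π a) ζ : H), (ξ : H)⟫_ℂ = ⟪(ζ : H), ((π (star a)) ξ : H)⟫_ℂ
  incstar : ∀ a, Q.InCStar (π a)
  bound : ∀ i : Υ, ∃ l : Λ, ∀ a : A, ∀ x : Q.D, (x : H) ∈ Q.E i →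
    ‖((π a) x : H)‖ ≤ L.p l a * ‖(x : H)‖

namespace QD

variable {Υ : Type*} [Preorder Υ] {H : Type*} [NormedAddCommGroup H]
  [InnerProductSpace ℂ H] [CompleteSpace H] (Q : QD Υ H)

theorem proj_eq_of_mem {i : Υ} {x : H} (h : x ∈ Q.E i) : Q.proj i x = x := by
  haveI : CompleteSpace (Q.E i) := (Q.isClosed i).completeSpace_coe
  exact Submodule.starProjection_eq_self_iff.mpr h

theorem norm_proj_le (i : Υ) (x : H) : ‖Q.proj i x‖ ≤ ‖x‖ := by
  haveI : CompleteSpace (Q.E i) := (Q.isClosed i).completeSpace_coe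
  calc ‖Q.proj i x‖ = ‖((Q.E i).orthogonalProjectionOnto x : H)‖ := rfl
    _ = ‖(Q.E i).orthogonalProjectionOnto x‖ := by rw [Submodule.norm_coe]
    _ ≤ ‖(Q.E i).orthogonalProjectionOnto‖ * ‖x‖ := ((Q.E i).orthogonalProjectionOnto).le_opNorm x
    _ ≤ 1 * ‖x‖ := by gcongr; exact Submodule.orthogonalProjectionOnto_norm_le _
    _ = ‖x‖ := one_mul _

end QD

/-- if `{H; E; D_E}` is a commutative quantized domain (the projections
`P_ι` mutually commute) and `π : A → C*(D_E)` is an irreducible local representation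
(i.e. `π(A)' ∩ C*(D_E) = ℂ·I`), then `H_ι = H` for all `ι`, and consequently
`C*(D_E) = B(H)` (membership in `C*(D_E)` is exactly boundedness). -/
theorem statement7 {Λ A : Type*} [Preorder Λ] [IsDirected Λ (· ≤ ·)] [Ring A]
    [StarRing A] [Algebra ℂ A] [TopologicalSpace A] [IsTopologicalRing A]
    {Υ : Type*} [Preorder Υ] [IsDirected Υ (· ≤ ·)] {H : Type*} [NormedAddCommGroup H]
    [InnerProductSpace ℂ H] [CompleteSpace H] (L : LCS Λ A) (Q : QD Υ H)
    (hcomm : ∀ i j (x : H), Q.proj i (Q.proj j x) = Q.proj j (Q.proj i x))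
    (ρ : LocalRepQ L Q)
    -- irreducibility: every `T ∈ π(A)' ∩ C*(D_E)` is a scalar multiple of the identity
    (hirr : ∀ (T : H →L[ℂ] H) (h : ∀ x : Q.D, T (x : H) ∈ Q.D),
      (∀ (a : A) (ξ : Q.D), T ((ρ.π a) ξ : H) = ((ρ.π a) (Q.restrictD T h ξ) : H)) →
      Q.InCStar (Q.restrictD T h) → ∃ c : ℂ, ∀ x : H, T x = c • x) :
    (∀ i, Q.E i = ⊤) ∧
    (∀ T : Q.D →ₗ[ℂ] Q.D, Q.InCStar T ↔
      ∃ C : ℝ, ∀ x : Q.D, ‖(T x : H)‖ ≤ C * ‖(x : H)‖) := by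
  have hΥ : Nonempty Υ := by
    by_contra h
    rw [not_nonempty_iff] at h
    have hd := Q.dense
    rw [Set.iUnion_of_empty] at hd
    exact absurd hd.nonempty (by simp)
  have hE : ∀ i, Q.E i = ⊤ := by
    intro i
    have hmemD : ∀ x : Q.D, Q.proj i (x : H) ∈ Q.D := fun x => Q.proj_mem_D i x
    have hcomm' : ∀ (a : A) (ξ : Q.D),
        Q.proj i ((ρ.π a) ξ : H) = ((ρ.π a) (Q.restrictD (Q.proj i) hmemD ξ) : H) :=
      fun a ξ => (ρ.incstar a i).2.2 ξ
    have hcs : Q.InCStar (Q.restrictD (Q.proj i) hmemD) := by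
      intro j
      refine ⟨⟨1, fun x => ?_⟩, fun x => ?_, fun x => ?_⟩
      · calc ‖Q.applyP (Q.restrictD (Q.proj i) hmemD) j x‖
            = ‖Q.proj i (Q.proj j x)‖ := rfl
          _ ≤ ‖Q.proj j x‖ := Q.norm_proj_le i _
          _ ≤ ‖x‖ := Q.norm_proj_le j x
          _ = 1 * ‖x‖ := (one_mul _).symm
      · show Q.proj j (Q.proj i (Q.proj j x)) = Q.proj i (Q.proj j x)
        rw [hcomm j i, Q.proj_eq_of_mem (Q.proj_mem_E j x)]
      · exact hcomm j i (x : H)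
    obtain ⟨c, hc⟩ := hirr (Q.proj i) hmemD hcomm' hcs
    obtain ⟨v, hv, hv0⟩ := (Submodule.ne_bot_iff _).mp (Q.nonzero i)
    have hc1 : c = 1 := by
      have h1 := hc v
      rw [Q.proj_eq_of_mem hv] at h1
      have h2 : (c - 1) • v = 0 := by rw [sub_smul, one_smul, ← h1, sub_self]
      rcases smul_eq_zero.mp h2 with h | h
      · exact sub_eq_zero.mp h
      · exact absurd h hv0
    rw [eq_top_iff]
    intro x _
    have h3 := hc x
    rw [hc1, one_smul] at h3
    rw [← h3]
    exact Q.proj_mem_E i x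
  have hp : ∀ i (y : H), Q.proj i y = y := fun i y =>
    Q.proj_eq_of_mem (by rw [hE i]; exact Submodule.mem_top)
  refine ⟨hE, fun T => ⟨fun hT => ?_, fun hB i => ?_⟩⟩
  · obtain ⟨i⟩ := hΥ
    obtain ⟨C, hC⟩ := (hT i).1
    refine ⟨C, fun x => ?_⟩
    have hxx : (⟨Q.proj i (x : H), Q.proj_mem_D i (x : H)⟩ : Q.D) = x :=
      Subtype.ext (hp i (x : H))
    have h2 : Q.applyP T i (x : H) = (T x : H) := by unfold QD.applyP; rw [hxx]
    rw [← h2]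
    exact hC (x : H)
  · obtain ⟨C, hC⟩ := hB
    refine ⟨⟨C, fun x => ?_⟩, fun x => hp i _, fun x => ?_⟩
    · calc ‖Q.applyP T i x‖ ≤ C * ‖Q.proj i x‖ := hC ⟨Q.proj i x, Q.proj_mem_D i x⟩
        _ = C * ‖x‖ := by rw [hp i x]
    · rw [hp i]
      have hxx : (⟨Q.proj i (x : H), Q.proj_mem_D i (x : H)⟩ : Q.D) = x :=
        Subtype.ext (hp i (x : H))
      show (T x : H) = Q.applyP T i (x : H)
      unfold QD.applyP
      rw [hxx]
end
end

section
/- Let S be a local operator system in a unital locally C*-algebra A, let {H; E = {H_ι}; D_E} be a commutative quantized domain, and let φ: S → C*(D_E) be a unital local completely positive map. If φ is pure (every local CP map ψ: S → C*(D_E) with φ − ψ local CP satisfies ψ = t₀φ for some t₀ ∈ [0,1]), then H_ι = H for all ι and C*(D_E) = B(H). -/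
noncomputable section

open scoped InnerProductSpace

open scoped ComplexOrder

section QCP

variable {Λ A : Type*} [Preorder Λ] [Ring A] [StarRing A] [Algebra ℂ A] [TopologicalSpace A]
variable {Υ : Type*} [Preorder Υ] {H : Type*} [NormedAddCommGroup H]
  [InnerProductSpace ℂ H] [CompleteSpace H]

/-- `λ`-positivity of a matrix over `A`: `[a] = b* b + c` with `p_λ`-null `c`. -/
def MatLPos (L : LCS Λ A) (l : Λ) {n : ℕ} (a : Matrix (Fin n) (Fin n) A) : Prop :=
  ∃ b : Matrix (Fin n) (Fin n) A,
    ∀ j k, L.p l (a j k - ∑ m, star (b m j) * b m k) = 0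

/-- The `(λ, ι)`-complete positivity condition for a map `φ : S → C*(D_E)`:
`φ⁽ⁿ⁾([a])|_{H_ι^{⊕n}} ≥ 0` whenever `[a]` is `λ`-positive and
`φ⁽ⁿ⁾([a])|_{H_ι^{⊕n}} = 0` whenever `p_λ^{(n)}([a]) = 0`. -/
def QLambdaCP (L : LCS Λ A) (S : Submodule ℂ A) (Q : QD Υ H) (l : Λ) (i : Υ)
    (φ : S →ₗ[ℂ] (Q.D →ₗ[ℂ] Q.D)) : Prop :=
  (∀ (n : ℕ) (a : Matrix (Fin n) (Fin n) A) (ha : ∀ j k, a j k ∈ S), MatLPos L l a →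
      ∀ ξ : Fin n → Q.D, (∀ j, ((ξ j : H)) ∈ Q.E i) →
        0 ≤ ∑ j, ∑ k, ⟪((ξ j : H)), (((φ ⟨a j k, ha j k⟩) (ξ k) : H))⟫_ℂ) ∧
  (∀ (a : A) (ha : a ∈ S), L.p l a = 0 →
      ∀ x : Q.D, (x : H) ∈ Q.E i → ((φ ⟨a, ha⟩) x : H) = 0)

/-- A local completely positive map `φ : S → C*(D_E)`. -/
def QLocalCP (L : LCS Λ A) (S : Submodule ℂ A) (Q : QD Υ H)
    (φ : S →ₗ[ℂ] (Q.D →ₗ[ℂ] Q.D)) : Prop :=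
  ∀ i : Υ, ∃ l : Λ, QLambdaCP L S Q l i φ

/-- The corresponding complete positivity condition for maps defined on all of `A`. -/
def QLambdaCPA (L : LCS Λ A) (Q : QD Υ H) (l : Λ) (i : Υ)
    (φ : A →ₗ[ℂ] (Q.D →ₗ[ℂ] Q.D)) : Prop :=
  (∀ (n : ℕ) (a : Matrix (Fin n) (Fin n) A), MatLPos L l a →
      ∀ ξ : Fin n → Q.D, (∀ j, ((ξ j : H)) ∈ Q.E i) →
        0 ≤ ∑ j, ∑ k, ⟪((ξ j : H)), (((φ (a j k)) (ξ k) : H))⟫_ℂ) ∧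
  (∀ a : A, L.p l a = 0 → ∀ x : Q.D, (x : H) ∈ Q.E i → ((φ a) x : H) = 0)

/-- A local completely positive map `A → C*(D_E)`. -/
def QLocalCPA (L : LCS Λ A) (Q : QD Υ H) (φ : A →ₗ[ℂ] (Q.D →ₗ[ℂ] Q.D)) : Prop :=
  ∀ i : Υ, ∃ l : Λ, QLambdaCPA L Q l i φ

/-- Purity of a local CP map `φ : S → C*(D_E)`: every local CP map `ψ` with `φ - ψ`
local CP is a multiple `t₀ φ`, `t₀ ∈ [0,1]`. -/
def QPure (L : LCS Λ A) (S : Submodule ℂ A) (Q : QD Υ H)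
    (φ : S →ₗ[ℂ] (Q.D →ₗ[ℂ] Q.D)) : Prop :=
  ∀ ψ : S →ₗ[ℂ] (Q.D →ₗ[ℂ] Q.D), (∀ s, Q.InCStar (ψ s)) → QLocalCP L S Q ψ →
    QLocalCP L S Q (φ - ψ) → ∃ t : ℝ, 0 ≤ t ∧ t ≤ 1 ∧ ψ = (t : ℂ) • φ

end QCP

section Aux

variable {Υ : Type*} [Preorder Υ] {H : Type*} [NormedAddCommGroup H]
  [InnerProductSpace ℂ H] [CompleteSpace H] (Q : QD Υ H)

theorem QD.proj_of_mem' {i : Υ} {x : H} (h : x ∈ Q.E i) : Q.proj i x = x := by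
  haveI : CompleteSpace (Q.E i) := (Q.isClosed i).completeSpace_coe
  exact (Submodule.starProjection_eq_self_iff (K := Q.E i)).mpr h

theorem QD.proj_proj' (i : Υ) (x : H) : Q.proj i (Q.proj i x) = Q.proj i x :=
  Q.proj_of_mem' (Q.proj_mem_E i x)

theorem QD.inner_proj' (i : Υ) (x y : H) :
    ⟪Q.proj i x, y⟫_ℂ = ⟪x, Q.proj i y⟫_ℂ := by
  haveI : CompleteSpace (Q.E i) := (Q.isClosed i).completeSpace_coe
  exact Submodule.inner_starProjection_left_eq_right (Q.E i) x y

theorem QD.norm_proj_le' (i : Υ) (x : H) : ‖Q.proj i x‖ ≤ ‖x‖ := by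
  haveI : CompleteSpace (Q.E i) := (Q.isClosed i).completeSpace_coe
  calc ‖Q.proj i x‖ = ‖(Q.E i).orthogonalProjectionOnto x‖ := rfl
    _ ≤ ‖((Q.E i).orthogonalProjectionOnto : H →L[ℂ] Q.E i)‖ * ‖x‖ :=
        ((Q.E i).orthogonalProjectionOnto).le_opNorm x
    _ ≤ 1 * ‖x‖ := by
        gcongr
        exact Submodule.orthogonalProjectionOnto_norm_le _
    _ = ‖x‖ := one_mul _

/-- The element `P_ι x` of `D_E`, for `x ∈ D_E`. -/
def QD.pmap (i : Υ) (x : Q.D) : Q.D := ⟨Q.proj i (x : H), Q.proj_mem_D i _⟩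

/-- Composition `P_ι ∘ T` as a map `D_E → D_E`. -/
def QD.projComp (i : Υ) (T : Q.D →ₗ[ℂ] Q.D) : Q.D →ₗ[ℂ] Q.D where
  toFun x := ⟨Q.proj i ((T x : H)), Q.mem_D_of_mem (Q.proj_mem_E i _)⟩
  map_add' x y := by ext : 1; simp
  map_smul' c x := by ext : 1; simp

@[simp] theorem QD.projComp_coe (i : Υ) (T : Q.D →ₗ[ℂ] Q.D) (x : Q.D) :
    ((Q.projComp i T x : Q.D) : H) = Q.proj i ((T x : H)) := rfl

/-- The compression `s ↦ P_ι ∘ φ(s)`. -/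
def auxPsi {A : Type*} [Ring A] [StarRing A] [Algebra ℂ A] (S : Submodule ℂ A)
    (i : Υ) (φ : S →ₗ[ℂ] (Q.D →ₗ[ℂ] Q.D)) : S →ₗ[ℂ] (Q.D →ₗ[ℂ] Q.D) where
  toFun s := Q.projComp i (φ s)
  map_add' s t := LinearMap.ext fun x => Subtype.ext <| by
    simp [QD.projComp, map_add]
  map_smul' c s := LinearMap.ext fun x => Subtype.ext <| by
    simp [QD.projComp, map_smul]

@[simp] theorem auxPsi_coe {A : Type*} [Ring A] [StarRing A] [Algebra ℂ A]
    (S : Submodule ℂ A) (i : Υ) (φ : S →ₗ[ℂ] (Q.D →ₗ[ℂ] Q.D)) (s : S) (x : Q.D) :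
    ((auxPsi Q S i φ s x : Q.D) : H) = Q.proj i ((φ s x : H)) := rfl

end Aux

/-- if `{H; E; D_E}` is a commutative quantized domain and
`φ : S → C*(D_E)` is a pure unital local CP map, then `H_ι = H` for all `ι` and
`C*(D_E) = B(H)`. -/
theorem statement10 {Λ A : Type*} [Preorder Λ] [IsDirected Λ (· ≤ ·)] [Ring A]
    [StarRing A] [Algebra ℂ A] [TopologicalSpace A] [IsTopologicalRing A]
    {Υ : Type*} [Preorder Υ] [IsDirected Υ (· ≤ ·)] {H : Type*} [NormedAddCommGroup H]
    [InnerProductSpace ℂ H] [CompleteSpace H]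
    (L : LCS Λ A) (Q : QD Υ H)
    (hcomm : ∀ i j (x : H), Q.proj i (Q.proj j x) = Q.proj j (Q.proj i x))
    (S : Submodule ℂ A) (h1 : (1 : A) ∈ S) (hstar : ∀ a ∈ S, star a ∈ S)
    (φ : S →ₗ[ℂ] (Q.D →ₗ[ℂ] Q.D))
    (hrange : ∀ s, Q.InCStar (φ s))
    (hunital : φ ⟨1, h1⟩ = LinearMap.id)
    (hcp : QLocalCP L S Q φ)
    (hpure : QPure L S Q φ) :
    (∀ i, Q.E i = ⊤) ∧
    (∀ T : Q.D →ₗ[ℂ] Q.D, Q.InCStar T ↔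
      ∃ C : ℝ, ∀ x : Q.D, ‖(T x : H)‖ ≤ C * ‖(x : H)‖) := by
  classical
  -- `Υ` is nonempty since the union of the `E i` is dense.
  have hne : Nonempty Υ := by
    by_contra hn
    rw [not_nonempty_iff] at hn
    have h0 := Q.dense 0
    rw [Set.iUnion_of_empty] at h0
    simp at h0
  -- STEP 1: every `E i` is the whole space.
  have hE : ∀ i, Q.E i = ⊤ := by
    intro i
    set ψ : S →ₗ[ℂ] (Q.D →ₗ[ℂ] Q.D) := auxPsi Q S i φ with hψdef
    have key : ∀ (s : S) (x : Q.D),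
        Q.proj i ((φ s x : H)) = ((φ s (Q.pmap i x) : Q.D) : H) :=
      fun s x => (hrange s i).2.2 x
    have pmap_pmap : ∀ x : Q.D, Q.pmap i (Q.pmap i x) = Q.pmap i x :=
      fun x => Subtype.ext (Q.proj_proj' i _)
    have hζmem : ∀ {j m : Υ}, i ≤ m → j ≤ m → ∀ x : Q.D, (x : H) ∈ Q.E j →
        ((x - Q.pmap i x : Q.D) : H) ∈ Q.E m := by
      intro j m him hjm x hx
      exact sub_mem (Q.mono hjm hx) (Q.mono him (Q.proj_mem_E i _))
    -- `ψ` takes values in `C*(D_E)`.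
    have hInC : ∀ s, Q.InCStar (ψ s) := by
      intro s j
      have hap : ∀ x : H, Q.applyP (ψ s) j x = Q.proj i (Q.applyP (φ s) j x) := fun _ => rfl
      refine ⟨?_, ?_, ?_⟩
      · obtain ⟨C, hC⟩ := (hrange s j).1
        exact ⟨C, fun x => by rw [hap]; exact (Q.norm_proj_le' i _).trans (hC x)⟩
      · intro x
        rw [hap, hcomm j i, (hrange s j).2.1 x]
      · intro x
        have : Q.proj j ((ψ s x : H)) = Q.proj j (Q.proj i ((φ s x : H))) := rfl
        rw [this, hcomm j i, (hrange s j).2.2 x, hap]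
    -- `ψ` is local CP.
    have hψcp : QLocalCP L S Q ψ := by
      intro j
      obtain ⟨l, hl⟩ := hcp i
      refine ⟨l, ?_, ?_⟩
      · intro n a ha hpos ξ hξ
        set η : Fin n → Q.D := fun k => Q.pmap i (ξ k) with hη
        have hηmem : ∀ k, ((η k : H)) ∈ Q.E i := fun k => Q.proj_mem_E i _
        have hfix : ∀ (s : S) (k : Fin n),
            Q.proj i ((φ s (η k) : H)) = ((φ s (η k) : Q.D) : H) := by
          intro s k
          rw [key s (η k), hη, pmap_pmap]
        have heq : ∀ j' k, ⟪((ξ j' : H)), ((ψ ⟨a j' k, ha j' k⟩ (ξ k) : Q.D) : H)⟫_ℂ =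
            ⟪((η j' : H)), ((φ ⟨a j' k, ha j' k⟩ (η k) : Q.D) : H)⟫_ℂ := by
          intro j' k
          set s : S := ⟨a j' k, ha j' k⟩
          calc ⟪((ξ j' : H)), ((ψ s (ξ k) : Q.D) : H)⟫_ℂ
              = ⟪((ξ j' : H)), Q.proj i ((φ s (ξ k) : H))⟫_ℂ := rfl
            _ = ⟪((ξ j' : H)), ((φ s (η k) : Q.D) : H)⟫_ℂ := by rw [key s (ξ k)]
            _ = ⟪((ξ j' : H)), Q.proj i ((φ s (η k) : H))⟫_ℂ := by rw [hfix s k]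
            _ = ⟪Q.proj i ((ξ j' : H)), ((φ s (η k) : Q.D) : H)⟫_ℂ :=
                (Q.inner_proj' i _ _).symm
            _ = ⟪((η j' : H)), ((φ s (η k) : Q.D) : H)⟫_ℂ := rfl
        simp only [heq]
        exact hl.1 n a ha hpos η hηmem
      · intro a ha hpa x hx
        have : ((ψ ⟨a, ha⟩ x : Q.D) : H) = ((φ ⟨a, ha⟩ (Q.pmap i x) : Q.D) : H) :=
          key ⟨a, ha⟩ x
        rw [this]
        exact hl.2 a ha hpa (Q.pmap i x) (Q.proj_mem_E i _)
    -- `φ - ψ` is local CP.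
    have hsub : ∀ (s : S) (x : Q.D),
        (((φ - ψ) s x : Q.D) : H) = ((φ s (x - Q.pmap i x) : Q.D) : H) := by
      intro s x
      have h1' : (((φ - ψ) s x : Q.D) : H) = ((φ s x : H)) - ((ψ s x : H)) := by
        simp
      rw [h1', map_sub]
      have : ((ψ s x : Q.D) : H) = ((φ s (Q.pmap i x) : Q.D) : H) := key s x
      rw [this]
      rfl
    have hφψcp : QLocalCP L S Q (φ - ψ) := by
      intro j
      obtain ⟨m, him, hjm⟩ := directed_of (· ≤ ·) i j
      obtain ⟨l, hl⟩ := hcp m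
      refine ⟨l, ?_, ?_⟩
      · intro n a ha hpos ξ hξ
        set ζ : Fin n → Q.D := fun k => ξ k - Q.pmap i (ξ k) with hζ
        have hζm : ∀ k, ((ζ k : H)) ∈ Q.E m := fun k => hζmem him hjm (ξ k) (hξ k)
        have hperp : ∀ (s : S) (k : Fin n), Q.proj i ((φ s (ζ k) : H)) = 0 := by
          intro s k
          rw [key s (ζ k)]
          have hz : Q.pmap i (ζ k) = 0 := by
            apply Subtype.ext
            show Q.proj i ((ξ k : H) - Q.proj i ((ξ k : H))) = (0 : H)
            rw [map_sub, Q.proj_proj', sub_self]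
          rw [hz, map_zero]
          rfl
        have heq : ∀ j' k, ⟪((ξ j' : H)), (((φ - ψ) ⟨a j' k, ha j' k⟩ (ξ k) : Q.D) : H)⟫_ℂ =
            ⟪((ζ j' : H)), ((φ ⟨a j' k, ha j' k⟩ (ζ k) : Q.D) : H)⟫_ℂ := by
          intro j' k
          set s : S := ⟨a j' k, ha j' k⟩
          rw [hsub s (ξ k)]
          have hzero : ⟪Q.proj i ((ξ j' : H)), ((φ s (ζ k) : Q.D) : H)⟫_ℂ = 0 := by
            rw [Q.inner_proj', hperp s k, inner_zero_right]
          have hdecomp : ((ξ j' : H)) = ((ζ j' : H)) + Q.proj i ((ξ j' : H)) := by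
            show _ = ((ξ j' : H) - Q.proj i ((ξ j' : H))) + _
            abel
          calc ⟪((ξ j' : H)), ((φ s (ζ k) : Q.D) : H)⟫_ℂ
              = ⟪((ζ j' : H)) + Q.proj i ((ξ j' : H)), ((φ s (ζ k) : Q.D) : H)⟫_ℂ := by
                rw [← hdecomp]
            _ = ⟪((ζ j' : H)), ((φ s (ζ k) : Q.D) : H)⟫_ℂ +
                ⟪Q.proj i ((ξ j' : H)), ((φ s (ζ k) : Q.D) : H)⟫_ℂ := inner_add_left _ _ _
            _ = ⟪((ζ j' : H)), ((φ s (ζ k) : Q.D) : H)⟫_ℂ := by rw [hzero, add_zero]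
        simp only [heq]
        exact hl.1 n a ha hpos ζ hζm
      · intro a ha hpa x hx
        rw [hsub ⟨a, ha⟩ x]
        exact hl.2 a ha hpa _ (hζmem him hjm x hx)
    -- purity gives `ψ = t • φ`, and unitality forces `t = 1`.
    obtain ⟨t, ht0, ht1, hts⟩ := hpure ψ hInC hψcp hφψcp
    have hprojt : ∀ x : Q.D, Q.proj i ((x : H)) = (t : ℂ) • ((x : H)) := by
      intro x
      have h : ((ψ ⟨1, h1⟩ x : Q.D) : H) = (((t : ℂ) • φ) ⟨1, h1⟩ x : H) := by rw [hts]
      have hL : ((ψ ⟨1, h1⟩ x : Q.D) : H) = Q.proj i ((x : H)) := by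
        rw [hψdef, auxPsi_coe, hunital]; rfl
      have hR : ((((t : ℂ) • φ) ⟨1, h1⟩ x : Q.D) : H) = (t : ℂ) • ((x : H)) := by
        rw [LinearMap.smul_apply, LinearMap.smul_apply, Submodule.coe_smul, hunital]; rfl
      rw [hL, hR] at h
      exact h
    obtain ⟨x0, hx0mem, hx0⟩ := Submodule.exists_mem_ne_zero_of_ne_bot (Q.nonzero i)
    have hx0D : x0 ∈ Q.D := Q.mem_D_of_mem hx0mem
    have hx0eq : x0 = (t : ℂ) • x0 := by
      have := hprojt ⟨x0, hx0D⟩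
      rwa [Q.proj_of_mem' hx0mem] at this
    have ht : (t : ℂ) = 1 := by
      by_contra h
      have : ((1 : ℂ) - (t : ℂ)) • x0 = 0 := by
        rw [sub_smul, one_smul, ← hx0eq, sub_self]
      rcases smul_eq_zero.mp this with h' | h'
      · exact h (by linear_combination -h')
      · exact hx0 h'
    have hfixall : ∀ x : Q.D, Q.proj i ((x : H)) = (x : H) := by
      intro x; rw [hprojt x, ht, one_smul]
    have hDsub : (Q.D : Set H) ⊆ (Q.E i : Set H) := by
      intro x hx
      have h2 : Q.proj i x = x := hfixall ⟨x, hx⟩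
      show x ∈ Q.E i
      rw [← h2]
      exact Q.proj_mem_E i x
    have hDdense : Dense (Q.D : Set H) := by
      refine Q.dense.mono ?_
      exact Set.iUnion_subset fun j x hx => Q.mem_D_of_mem hx
    refine Submodule.eq_top_iff'.mpr fun x => ?_
    exact ((Q.isClosed i).closure_subset_iff.mpr hDsub) (hDdense x)
  refine ⟨hE, ?_⟩
  -- STEP 2: `C*(D_E)` consists exactly of the bounded operators.
  have hproj_id : ∀ (i : Υ) (x : H), Q.proj i x = x := fun i x =>
    Q.proj_of_mem' (by rw [hE i]; trivial)
  obtain ⟨i₀⟩ := hne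
  intro T
  constructor
  · intro hT
    obtain ⟨C, hC⟩ := (hT i₀).1
    refine ⟨C, fun x => ?_⟩
    have h := hC (x : H)
    have hx : (⟨Q.proj i₀ ((x : H)), Q.proj_mem_D i₀ _⟩ : Q.D) = x :=
      Subtype.ext (hproj_id i₀ _)
    simpa [QD.applyP, hx] using h
  · rintro ⟨C, hC⟩ i
    refine ⟨⟨C, fun x => ?_⟩, fun x => hproj_id i _, fun x => ?_⟩
    · have h := hC ⟨Q.proj i x, Q.proj_mem_D i x⟩
      simpa [QD.applyP, hproj_id] using h
    · have hx : (⟨Q.proj i ((x : H)), Q.proj_mem_D i _⟩ : Q.D) = x :=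
        Subtype.ext (hproj_id i _)
      rw [hproj_id i]
      simp [QD.applyP, hx]
end
end
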